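/- For X exponential with rate θ and n=2: S_α(X_SRS) = (1/(α−1))(1 − θ^{2α−2}/α²), S_α(X_RSS) = (1/(α−1))(1 − θ^{2α−2} 4^α B(α+1,α)/(2α)), and S_α(X_MRSSU) = (1/(α−1))(1 − θ^{2α−2} 2^α B(α+1,α)/α), where B is the Beta function. -/

import Mathlib

open MeasureTheory Set Real

/-! The order statistic `X_{(1:2)}` of an exponential(θ) pair is exponential(2θ), and for any
rate `λ` the integral of the `α`-th power of the exponential density is `λ^(α-1)/α`. The
remaining integral, of `(2 f F)^α`, becomes a Beta integral under the substitution `u = F(x)`. -/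

lemma integral_rpow_exponential_density (θ α : ℝ) (hθ : 0 < θ) (hα : 0 < α) :
    ∫ x in Ioi (0:ℝ), (θ * exp (-θ * x)) ^ α = θ ^ (α - 1) / α := by
  have hpow : ∀ x : ℝ, (θ * exp (-θ * x)) ^ α = θ ^ α * exp (-(θ * α * x)) := by
    intro x
    rw [mul_rpow hθ.le (exp_pos _).le, ← exp_mul]
    ring_nf
  have hexp : ∫ x in Ioi (0:ℝ), exp (-(θ * α * x)) = (θ * α)⁻¹ := by
    have h := integral_comp_mul_left_Ioi (fun y => exp (-y)) 0 (mul_pos hθ hα)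
    rwa [mul_zero, integral_exp_neg_Ioi_zero, smul_eq_mul, mul_one] at h
  simp_rw [hpow]
  rw [integral_const_mul, hexp, rpow_sub_one hθ.ne']
  field_simp

lemma strictMono_one_sub_exp_neg_mul {θ : ℝ} (hθ : 0 < θ) :
    StrictMono fun x : ℝ => 1 - exp (-θ * x) :=
  fun _ _ hxy => sub_lt_sub_left (exp_lt_exp.mpr (by nlinarith)) 1

lemma image_one_sub_exp_neg_mul_Ioi {θ : ℝ} (hθ : 0 < θ) :
    (fun x => 1 - exp (-θ * x)) '' Ioi 0 = Ioo 0 1 := by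
  ext u
  constructor
  · rintro ⟨x, hx, rfl⟩
    have hpos : 0 < 1 - exp (-θ * x) := by simpa using strictMono_one_sub_exp_neg_mul hθ hx
    exact ⟨hpos, by linarith [exp_pos (-θ * x)]⟩
  · rintro ⟨hu0, hu1⟩
    have hlog : log (1 - u) < 0 := log_neg (by linarith) (by linarith)
    refine ⟨-log (1 - u) / θ, div_pos (neg_pos.mpr hlog) hθ, ?_⟩
    have harg : -θ * (-log (1 - u) / θ) = log (1 - u) := by field_simp
    simp only [harg, exp_log (sub_pos.mpr hu1), sub_sub_cancel]

lemma setIntegral_Ioi_exponential_density_mul_comp_cdf {θ : ℝ} (hθ : 0 < θ) (g : ℝ → ℝ) :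
    ∫ x in Ioi (0:ℝ), θ * exp (-θ * x) * g (1 - exp (-θ * x)) = ∫ u in Ioo (0:ℝ) 1, g u := by
  have hderiv : ∀ x ∈ Ioi (0:ℝ),
      HasDerivWithinAt (fun x => 1 - exp (-θ * x)) (θ * exp (-θ * x)) (Ioi 0) x := by
    intro x _
    have h : HasDerivAt (fun x => 1 - exp (-θ * x)) (-(exp (-θ * x) * (-θ * 1))) x :=
      ((hasDerivAt_id x).const_mul (-θ)).exp.const_sub 1
    exact (h.congr_deriv (by ring)).hasDerivWithinAt
  rw [← image_one_sub_exp_neg_mul_Ioi hθ,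
    integral_image_eq_integral_abs_deriv_smul measurableSet_Ioi hderiv
      (strictMono_one_sub_exp_neg_mul hθ).injective.injOn]
  refine setIntegral_congr_fun measurableSet_Ioi fun x _ => ?_
  rw [abs_of_pos (by positivity), smul_eq_mul]

lemma rpow_two_mul_density_mul_cdf {θ α e u : ℝ} (hθ : 0 < θ) (he : 0 < e) (hu : 0 ≤ u) :
    (2 * (θ * e) * u) ^ α = θ * e * (2 ^ α * θ ^ (α - 1) * (u ^ α * e ^ (α - 1))) := by
  rw [mul_rpow (by positivity) hu, mul_rpow zero_le_two (by positivity), mul_rpow hθ.le he.le,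
    rpow_sub_one hθ.ne', rpow_sub_one he.ne']
  field_simp

lemma integral_rpow_two_mul_density_mul_cdf (θ α : ℝ) (hθ : 0 < θ) :
    ∫ x in Ioi (0:ℝ), (2 * (θ * exp (-θ * x)) * (1 - exp (-θ * x))) ^ α
      = 2 ^ α * θ ^ (α - 1) * ∫ u in (0:ℝ)..1, u ^ α * (1 - u) ^ (α - 1) := by
  rw [intervalIntegral.integral_of_le zero_le_one, integral_Ioc_eq_integral_Ioo,
    ← integral_const_mul, ← setIntegral_Ioi_exponential_density_mul_comp_cdf hθ]
  refine setIntegral_congr_fun measurableSet_Ioi fun x hx => ?_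
  have hcdf : 0 ≤ 1 - exp (-θ * x) :=
    sub_nonneg.mpr (exp_le_one_iff.mpr (by nlinarith [mem_Ioi.mp hx]))
  rw [sub_sub_cancel]
  exact rpow_two_mul_density_mul_cdf hθ (exp_pos _) hcdf

lemma one_div_one_sub_mul_sub_one (α p : ℝ) : 1 / (1 - α) * (p - 1) = 1 / (α - 1) * (1 - p) := by
  rw [← neg_sub α 1, one_div_neg_eq_neg_one_div]
  ring

theorem tsallis_exponential_n2_general
    (θ α : ℝ) (hθ : 0 < θ) (hα : 0 < α)
    (B : ℝ) (hB : B = ∫ u in (0:ℝ)..1, u ^ α * (1 - u) ^ (α - 1)) :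
    ((1 / (1 - α)) *
        ((∫ x in Set.Ioi (0:ℝ), (θ * Real.exp (-θ * x)) ^ α) ^ 2 - 1)
        = (1 / (α - 1)) * (1 - θ ^ (2 * α - 2) / α ^ 2)) ∧
    ((1 / (1 - α)) *
        ((∫ x in Set.Ioi (0:ℝ),
            (2 * (θ * Real.exp (-θ * x)) * (1 - (1 - Real.exp (-θ * x)))) ^ α) *
          (∫ x in Set.Ioi (0:ℝ),
            (2 * (θ * Real.exp (-θ * x)) * (1 - Real.exp (-θ * x))) ^ α) - 1)
        = (1 / (α - 1)) * (1 - θ ^ (2 * α - 2) * 4 ^ α * B / (2 * α))) ∧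
    ((1 / (1 - α)) *
        ((∫ x in Set.Ioi (0:ℝ), (θ * Real.exp (-θ * x)) ^ α) *
          (∫ x in Set.Ioi (0:ℝ),
            (2 * (θ * Real.exp (-θ * x)) * (1 - Real.exp (-θ * x))) ^ α) - 1)
        = (1 / (α - 1)) * (1 - θ ^ (2 * α - 2) * 2 ^ α * B / α)) := by
  have hmin : ∀ x : ℝ, 2 * (θ * exp (-θ * x)) * (1 - (1 - exp (-θ * x)))
      = 2 * θ * exp (-(2 * θ) * x) := fun x => by
    rw [show -(2 * θ) * x = -θ * x + -θ * x by ring, exp_add]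
    ring
  simp only [hmin, one_div_one_sub_mul_sub_one,
    integral_rpow_exponential_density _ α (mul_pos two_pos hθ) hα,
    integral_rpow_exponential_density θ α hθ hα,
    integral_rpow_two_mul_density_mul_cdf θ α hθ, ← hB]
  have hθsq : θ ^ (2 * α - 2) = θ ^ (α - 1) * θ ^ (α - 1) := by
    rw [← rpow_add hθ]; ring_nf
  have h2 : (2:ℝ) ^ α = 2 ^ (α - 1) * 2 := by rw [rpow_sub_one two_ne_zero]; field_simp
  have h4 : (4:ℝ) ^ α = 2 ^ α * 2 ^ α := by
    rw [← mul_rpow zero_le_two zero_le_two]; norm_num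
  rw [mul_rpow zero_le_two hθ.le, hθsq, h4, h2]
  refine ⟨?_, ?_, ?_⟩ <;> congr 2 <;> field_simp

/-- Tsallis entropies of SRS, RSS and MRSSU samples of size 2 from an
exponential(θ) population, where `B(a,b) = ∫₀¹ u^{a-1}(1-u)^{b-1} du`. -/
theorem tsallis_exponential_n2
    (θ α : ℝ) (hθ : 0 < θ) (hα : 0 < α) (hα1 : α ≠ 1)
    (B : ℝ) (hB : B = ∫ u in (0:ℝ)..1, u ^ α * (1 - u) ^ (α - 1)) :
    ((1 / (1 - α)) *
        ((∫ x in Set.Ioi (0:ℝ), (θ * Real.exp (-θ * x)) ^ α) ^ 2 - 1)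
        = (1 / (α - 1)) * (1 - θ ^ (2 * α - 2) / α ^ 2)) ∧
    ((1 / (1 - α)) *
        ((∫ x in Set.Ioi (0:ℝ),
            (2 * (θ * Real.exp (-θ * x)) * (1 - (1 - Real.exp (-θ * x)))) ^ α) *
          (∫ x in Set.Ioi (0:ℝ),
            (2 * (θ * Real.exp (-θ * x)) * (1 - Real.exp (-θ * x))) ^ α) - 1)
        = (1 / (α - 1)) * (1 - θ ^ (2 * α - 2) * 4 ^ α * B / (2 * α))) ∧
    ((1 / (1 - α)) *
        ((∫ x in Set.Ioi (0:ℝ), (θ * Real.exp (-θ * x)) ^ α) *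
          (∫ x in Set.Ioi (0:ℝ),
            (2 * (θ * Real.exp (-θ * x)) * (1 - Real.exp (-θ * x))) ^ α) - 1)
        = (1 / (α - 1)) * (1 - θ ^ (2 * α - 2) * 2 ^ α * B / α)) :=
  tsallis_exponential_n2_general θ α hθ hα B hB
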